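/- Let A be a C*-algebra. If every densely defined closed A-linear operator between arbitrary Hilbert A-modules possesses a densely defined adjoint operator, then every bounded A-linear operator T: E → F between Hilbert A-modules possesses a bounded adjoint T*: F → E. -/

import Mathlib

/- Framework: Hilbert C*-modules over a C*-algebra `A` (via Mathlib's `CStarModule`),
densely defined operators as `LinearPMap`s, `A`-valued orthogonality, adjoints,
regularity, graphs inside `E ⊕ F`. -/

open scoped InnerProductSpace RightActions WithCStarModule

/-- The December-2024 Mathlib notion `CStarModule` (right `A`-module, `A`-valued inner product
with `⟪x, y <• a⟫ = ⟪x, y⟫ * a`), spelled out since Mathlib's `CStarModule` now means a left module. -/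
class OldCStarModule (A : outParam <| Type*) (E : Type*) [NonUnitalSemiring A] [StarRing A]
    [Module ℂ A] [AddCommGroup E] [Module ℂ E] [PartialOrder A] [SMul Aᵐᵒᵖ E] [Norm A] [Norm E]
    extends Inner A E where
  inner_add_right {x} {y} {z} : inner x (y + z) = inner x y + inner x z
  inner_self_nonneg {x} : 0 ≤ inner x x
  inner_self {x} : inner x x = 0 ↔ x = 0
  inner_op_smul_right {a : A} {x y : E} : inner x (y <• a) = inner x y * a
  inner_smul_right_complex {z : ℂ} {x} {y} : inner x (z • y) = z • inner x y
  star_inner x y : star (inner x y) = inner y x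
  norm_eq_sqrt_norm_inner_self x : ‖x‖ = √‖inner x x‖

section OldCStarModuleBridge

variable (A : Type*) [NonUnitalCStarAlgebra A] [PartialOrder A] [StarOrderedRing A]

/-- An old-style right C⋆-module over `A` is a (current) C⋆-module over `Aᵐᵒᵖ`. -/
noncomputable def OldCStarModule.toNew (E : Type*) [NormedAddCommGroup E] [Module ℂ E]
    [SMul Aᵐᵒᵖ E] [OldCStarModule A E] : CStarModule Aᵐᵒᵖ E where
  inner x y := MulOpposite.op ⟪x, y⟫_A
  inner_add_right {x y z} := by
    change MulOpposite.op ⟪x, y + z⟫_A = MulOpposite.op ⟪x, y⟫_A + MulOpposite.op ⟪x, z⟫_A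
    rw [OldCStarModule.inner_add_right, MulOpposite.op_add]
  inner_self_nonneg {x} := by
    change (0 : Aᵐᵒᵖ) ≤ MulOpposite.op ⟪x, x⟫_A
    exact MulOpposite.unop_le_unop.mp OldCStarModule.inner_self_nonneg
  inner_self {x} := by
    change MulOpposite.op ⟪x, x⟫_A = 0 ↔ x = 0
    rw [MulOpposite.op_eq_zero_iff, OldCStarModule.inner_self]
  inner_op_smul_right {a x y} := by
    change MulOpposite.op ⟪x, y <• a.unop⟫_A = a * MulOpposite.op ⟪x, y⟫_A
    rw [OldCStarModule.inner_op_smul_right, MulOpposite.op_mul, MulOpposite.op_unop]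
  inner_smul_right_complex {z x y} := by
    change MulOpposite.op ⟪x, z • y⟫_A = z • MulOpposite.op ⟪x, y⟫_A
    rw [OldCStarModule.inner_smul_right_complex, MulOpposite.op_smul]
  star_inner x y := congrArg MulOpposite.op (OldCStarModule.star_inner x y)
  norm_eq_sqrt_norm_inner_self x := OldCStarModule.norm_eq_sqrt_norm_inner_self x

/-- A (current) C⋆-module over `Aᵐᵒᵖ` is an old-style right C⋆-module over `A`. -/
noncomputable def OldCStarModule.ofNew (E : Type*) [NormedAddCommGroup E] [Module ℂ E]
    [SMul Aᵐᵒᵖ E] [CStarModule Aᵐᵒᵖ E] : OldCStarModule A E where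
  inner x y := MulOpposite.unop (Inner.inner (Aᵐᵒᵖ) x y)
  inner_add_right {x y z} := by
    change MulOpposite.unop (Inner.inner (Aᵐᵒᵖ) x (y + z)) =
      MulOpposite.unop (Inner.inner (Aᵐᵒᵖ) x y) + MulOpposite.unop (Inner.inner (Aᵐᵒᵖ) x z)
    rw [CStarModule.inner_add_right, MulOpposite.unop_add]
  inner_self_nonneg {x} := by
    change (0 : A) ≤ MulOpposite.unop (Inner.inner (Aᵐᵒᵖ) x x)
    exact MulOpposite.unop_le_unop.mpr (CStarModule.inner_self_nonneg (A := Aᵐᵒᵖ))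
  inner_self {x} := by
    change MulOpposite.unop (Inner.inner (Aᵐᵒᵖ) x x) = 0 ↔ x = 0
    rw [MulOpposite.unop_eq_zero_iff, CStarModule.inner_self]
  inner_op_smul_right {a x y} := by
    change MulOpposite.unop (Inner.inner (Aᵐᵒᵖ) x (MulOpposite.op a • y)) =
      MulOpposite.unop (Inner.inner (Aᵐᵒᵖ) x y) * a
    rw [CStarModule.inner_op_smul_right, MulOpposite.unop_mul, MulOpposite.unop_op]
  inner_smul_right_complex {z x y} := by
    change MulOpposite.unop (Inner.inner (Aᵐᵒᵖ) x (z • y)) =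
      z • MulOpposite.unop (Inner.inner (Aᵐᵒᵖ) x y)
    rw [CStarModule.inner_smul_right_complex, MulOpposite.unop_smul]
  star_inner x y := congrArg MulOpposite.unop (CStarModule.star_inner (A := Aᵐᵒᵖ) x y)
  norm_eq_sqrt_norm_inner_self x := CStarModule.norm_eq_sqrt_norm_inner_self (A := Aᵐᵒᵖ) x

variable {A}
variable {E F : Type*}
  [NormedAddCommGroup E] [Module ℂ E] [SMul Aᵐᵒᵖ E] [OldCStarModule A E]
  [NormedAddCommGroup F] [Module ℂ F] [SMul Aᵐᵒᵖ F] [OldCStarModule A F]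

/-- The old `C⋆ᵐᵒᵈ (E × F)`: norm `√‖⟪x.1, x.1⟫ + ⟪x.2, x.2⟫‖`. -/
noncomputable instance OldCStarModule.instNormedAddCommGroupProd :
    NormedAddCommGroup C⋆ᵐᵒᵈ(Aᵐᵒᵖ, E × F) :=
  letI := OldCStarModule.toNew A E; letI := OldCStarModule.toNew A F; inferInstance

/-- The old `C⋆ᵐᵒᵈ (E × F)`: inner product `⟪x, y⟫ = ⟪x.1, y.1⟫ + ⟪x.2, y.2⟫`. -/
noncomputable instance OldCStarModule.instProd : OldCStarModule A C⋆ᵐᵒᵈ(Aᵐᵒᵖ, E × F) :=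
  letI := OldCStarModule.toNew A E; letI := OldCStarModule.toNew A F
  OldCStarModule.ofNew A _

end OldCStarModuleBridge

namespace RegularOperators

variable (A : Type*) [NonUnitalCStarAlgebra A] [PartialOrder A] [StarOrderedRing A]

section Defs

variable {E F : Type*}
  [NormedAddCommGroup E] [Module ℂ E] [SMul Aᵐᵒᵖ E] [OldCStarModule A E]
  [NormedAddCommGroup F] [Module ℂ F] [SMul Aᵐᵒᵖ F] [OldCStarModule A F]

/-- Orthogonal complement of a subset w.r.t. the `A`-valued inner product. -/
def ortho (S : Set E) : Set E := {y | ∀ u ∈ S, ⟪u, y⟫_A = 0}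

/-- `S` is orthogonally complemented (an orthogonal summand): every element of `E`
decomposes as a sum of an element of `S` and an element of `S^⊥`. -/
def OrthoComplemented (S : Set E) : Prop := ∀ z : E, ∃ u ∈ S, ∃ v ∈ ortho A S, z = u + v

/-- A partially defined operator is `A`-linear (for the right `A`-module action). -/
def AModuleMap (t : E →ₗ.[ℂ] F) : Prop :=
  ∀ (a : A) (x : t.domain), ∃ hx : (x : E) <• a ∈ t.domain, t ⟨(x : E) <• a, hx⟩ = (t x) <• a

/-- Kernel of a partially defined operator, as a subset of `E`. -/
def kerSet (t : E →ₗ.[ℂ] F) : Set E := {x | ∃ hx : x ∈ t.domain, t ⟨x, hx⟩ = 0}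

/-- Range of a partially defined operator. -/
def ranSet (t : E →ₗ.[ℂ] F) : Set F := {y | ∃ x : t.domain, t x = y}

/-- Domain of the adjoint: those `y` for which some `z` satisfies `⟪tx, y⟫ = ⟪x, z⟫`
for all `x` in the domain of `t`. -/
def adjDomain (t : E →ₗ.[ℂ] F) : Set F :=
  {y | ∃ z : E, ∀ x : t.domain, ⟪t x, y⟫_A = ⟪(x : E), z⟫_A}

/-- `s` is the adjoint operator `t*` of `t`. -/
structure IsAdjoint (t : E →ₗ.[ℂ] F) (s : F →ₗ.[ℂ] E) : Prop where
  dom : (s.domain : Set F) = adjDomain A t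
  inner_eq : ∀ (x : t.domain) (y : s.domain), ⟪t x, (y : F)⟫_A = ⟪(x : E), s y⟫_A

/-- The range of `1 + t*t` (where `s` plays the role of `t*`). -/
def onePlusRange (t : E →ₗ.[ℂ] F) (s : F →ₗ.[ℂ] E) : Set E :=
  {u | ∃ (x : t.domain) (h : t x ∈ s.domain), (x : E) + s ⟨t x, h⟩ = u}

/-- `t` is a regular operator with adjoint `s`: it is `A`-linear, densely defined,
closed, adjointable with densely defined adjoint, and `1 + t*t` has dense range. -/
structure IsRegular (t : E →ₗ.[ℂ] F) (s : F →ₗ.[ℂ] E) : Prop where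
  amod : AModuleMap A t
  denseDom : Dense (t.domain : Set E)
  closedGraph : IsClosed (t.graph : Set (E × F))
  adj : IsAdjoint A t s
  denseAdjDom : Dense (s.domain : Set F)
  denseOnePlusRange : Dense (onePlusRange t s)

/-- The graph of `t` inside the Hilbert `A`-module `E ⊕ F`. -/
def graphSet (t : E →ₗ.[ℂ] F) : Set (C⋆ᵐᵒᵈ(Aᵐᵒᵖ, E × F)) :=
  {w | ∃ x : t.domain, WithCStarModule.equiv Aᵐᵒᵖ (E × F) w = ((x : E), t x)}

/-- The range of `P_F ∘ P_{G(t)^⊥}`, i.e. the image of `G(t)^⊥ ⊆ E ⊕ F` under the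
canonical projection onto `F`. -/
def pfRange (t : E →ₗ.[ℂ] F) : Set F :=
  {y | ∃ w ∈ ortho A (graphSet A t), (WithCStarModule.equiv Aᵐᵒᵖ (E × F) w).2 = y}

end Defs

end RegularOperators

/-! Viewed as an everywhere defined closed operator, `T` has by hypothesis a densely defined
adjoint `s`. Since `‖s y‖² = ‖⟪T (s y), y⟫‖ ≤ ‖T‖ ‖s y‖ ‖y‖`, `s` is bounded on its dense domain,
so it extends by continuity to all of `F`, and the adjoint relation passes to the limit. -/

namespace OldCStarModule

variable {A : Type*} [NonUnitalCStarAlgebra A] [PartialOrder A]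
  {E : Type*} [NormedAddCommGroup E] [Module ℂ E] [SMul Aᵐᵒᵖ E] [OldCStarModule A E]

lemma norm_sq_eq (x : E) : ‖x‖ ^ 2 = ‖⟪x, x⟫_A‖ := by
  rw [norm_eq_sqrt_norm_inner_self (A := A) x, Real.sq_sqrt (norm_nonneg _)]

variable [StarOrderedRing A]

noncomputable abbrev normedSpace : NormedSpace ℂ E :=
  letI := toNew A E
  .ofCore (CStarModule.normedSpaceCore Aᵐᵒᵖ)

lemma norm_inner_le (x y : E) : ‖⟪x, y⟫_A‖ ≤ ‖x‖ * ‖y‖ :=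
  letI := toNew A E
  CStarModule.norm_inner_le (A := Aᵐᵒᵖ) E

lemma continuous_inner_right (x : E) : Continuous fun y : E => ⟪x, y⟫_A :=
  letI := toNew A E
  letI : NormedSpace ℂ E := normedSpace
  MulOpposite.continuous_unop.comp <|
    (CStarModule.continuous_inner (A := Aᵐᵒᵖ) (E := E)).comp (continuous_const.prodMk continuous_id)

variable {F : Type*} [NormedAddCommGroup F] [Module ℂ F] [SMul Aᵐᵒᵖ F] [OldCStarModule A F]

lemma norm_le_of_forall_inner_eq {T : E → F} {C : ℝ} (hC : 0 ≤ C) (hT : ∀ x, ‖T x‖ ≤ C * ‖x‖)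
    {y : F} {z : E} (h : ∀ x, ⟪T x, y⟫_A = ⟪x, z⟫_A) : ‖z‖ ≤ C * ‖y‖ := by
  have hsq : ‖z‖ ^ 2 ≤ C * ‖y‖ * ‖z‖ :=
    calc ‖z‖ ^ 2 = ‖⟪T z, y⟫_A‖ := by rw [norm_sq_eq, h]
      _ ≤ ‖T z‖ * ‖y‖ := norm_inner_le _ _
      _ ≤ C * ‖z‖ * ‖y‖ := by gcongr; exact hT z
      _ = C * ‖y‖ * ‖z‖ := by ring
  nlinarith [norm_nonneg z, norm_nonneg y, mul_nonneg hC (norm_nonneg y)]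

end OldCStarModule

theorem ContinuousLinearMap.isClosed_toPMap_top {R M N : Type*} [CommRing R]
    [AddCommGroup M] [Module R M] [TopologicalSpace M] [AddCommGroup N] [Module R N]
    [TopologicalSpace N] [T2Space N] (T : M →L[R] N) : ((T : M →ₗ[R] N).toPMap ⊤).IsClosed := by
  have hgraph : (((T : M →ₗ[R] N).toPMap ⊤).graph : Set (M × N)) = {p | T p.1 = p.2} := by
    ext p
    simp [LinearPMap.mem_graph_iff]
  rw [LinearPMap.IsClosed, hgraph]
  exact isClosed_eq (T.continuous.comp continuous_fst) continuous_snd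

theorem LinearPMap.exists_extension_of_dense_of_norm_le {𝕜 E F : Type*}
    [NontriviallyNormedField 𝕜] [NormedAddCommGroup E] [NormedSpace 𝕜 E]
    [NormedAddCommGroup F] [NormedSpace 𝕜 F] [CompleteSpace F] (f : E →ₗ.[𝕜] F)
    (hf : Dense (f.domain : Set E)) {C : ℝ} (hC : ∀ x, ‖f x‖ ≤ C * ‖(x : E)‖) :
    ∃ g : E →L[𝕜] F, ∀ x : f.domain, g x = f x :=
  ⟨(f.toFun.mkContinuous C hC).extend f.domain.subtypeL, fun x =>
    ContinuousLinearMap.extend_eq _ hf.denseRange_val isometry_subtype_coe.isUniformInducing x⟩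

namespace RegularOperators

lemma aModuleMap_toPMap_top {A E F : Type*} [NormedAddCommGroup E] [Module ℂ E] [SMul Aᵐᵒᵖ E]
    [NormedAddCommGroup F] [Module ℂ F] [SMul Aᵐᵒᵖ F] {T : E →ₗ[ℂ] F}
    (hT : ∀ (a : A) (x : E), T (x <• a) = T x <• a) : AModuleMap A (T.toPMap ⊤) :=
  fun a x => ⟨Submodule.mem_top, hT a x⟩

end RegularOperators

open RegularOperators

universe u

variable {A : Type u} [NonUnitalCStarAlgebra A] [PartialOrder A] [StarOrderedRing A]
variable {E F : Type u}
  [NormedAddCommGroup E] [Module ℂ E] [SMul Aᵐᵒᵖ E] [OldCStarModule A E] [CompleteSpace E]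
  [NormedAddCommGroup F] [Module ℂ F] [SMul Aᵐᵒᵖ F] [OldCStarModule A F] [CompleteSpace F]

/-- if every densely defined closed `A`-linear operator between Hilbert
`A`-modules possesses a densely defined adjoint, then every bounded `A`-linear operator
`T : E → F` possesses a bounded adjoint `T* : F → E`. -/
theorem bounded_adjointable_of_forall_densely_defined_adjointable
    (h : ∀ (E' F' : Type u) [NormedAddCommGroup E'] [Module ℂ E'] [SMul Aᵐᵒᵖ E']
      [OldCStarModule A E'] [CompleteSpace E'] [NormedAddCommGroup F'] [Module ℂ F']
      [SMul Aᵐᵒᵖ F'] [OldCStarModule A F'] [CompleteSpace F'] (t : E' →ₗ.[ℂ] F'),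
      AModuleMap A t → Dense (t.domain : Set E') → IsClosed (t.graph : Set (E' × F')) →
        ∃ s : F' →ₗ.[ℂ] E', IsAdjoint A t s ∧ Dense (s.domain : Set F'))
    (T : E →L[ℂ] F) (hmod : ∀ (a : A) (x : E), T (x <• a) = (T x) <• a) :
    ∃ Ts : F →L[ℂ] E, ∀ (x : E) (y : F), ⟪T x, y⟫_A = ⟪x, Ts y⟫_A := by
  let : NormedSpace ℂ E := OldCStarModule.normedSpace
  let : NormedSpace ℂ F := OldCStarModule.normedSpace
  obtain ⟨s, hadj, hs⟩ := h E F ((T : E →ₗ[ℂ] F).toPMap ⊤) (aModuleMap_toPMap_top hmod)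
    (by simp) T.isClosed_toPMap_top
  have hinner (x : E) (y : s.domain) : ⟪T x, (y : F)⟫_A = ⟪x, s y⟫_A :=
    hadj.inner_eq ⟨x, Submodule.mem_top⟩ y
  obtain ⟨Ts, hTs⟩ := s.exists_extension_of_dense_of_norm_le hs (C := ‖T‖) fun y =>
    OldCStarModule.norm_le_of_forall_inner_eq (norm_nonneg T) T.le_opNorm (hinner · y)
  refine ⟨Ts, fun x => congrFun ?_⟩
  refine Continuous.ext_on hs (OldCStarModule.continuous_inner_right _)
    ((OldCStarModule.continuous_inner_right x).comp Ts.continuous) fun y hy => ?_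
  rw [hTs ⟨y, hy⟩]
  exact hinner x ⟨y, hy⟩
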